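/- arXiv:1301.5588 — 2 statements merged into one kernel-verified Lean document; each statement's English description precedes it below -/
import Mathlib

section
/- Let B ∈ V(A'(T)). If B satisfies the identity S2(u,v,x,y,z) ≈ 0, then B satisfies J(x,y,z) ≈ x ∧ y and J'(x,y,z) ≈ K(x,y,z) ≈ x ∧ y ∧ z. -/
open FirstOrder

namespace McKenzie

/-- A Turing machine instruction `(s, r, w, d, t)`: "in state `s` reading `r`,
write `w`, move in direction `d` (`true` = right, `false` = left), enter state `t`". -/
structure Instr (n : ℕ) where
  s : Fin (n + 1)
  r : Bool
  w : Bool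
  d : Bool
  t : Fin (n + 1)

/-- A Turing machine: a finite list of instructions on states `μ0, …, μn`
(represented by `Fin (states+1)`), where `μ0` is the halting state (carrying no
instructions) and `μ1` is the initial state. -/
structure TM where
  states : ℕ
  instr : List (Instr states)
  halt_no_instr : ∀ i ∈ instr, i.s ≠ 0

/-- A configuration of a Turing machine: a tape, a head position and a state. -/
structure Cfg (T : TM) where
  tape : ℤ → Bool
  head : ℤ
  state : Fin (T.states + 1)

/-- One computation step of the machine (using the first applicable instruction). -/
def TM.step (T : TM) (Q : Cfg T) : Option (Cfg T) :=
  match T.instr.find? (fun i => decide (i.s = Q.state ∧ i.r = Q.tape Q.head)) with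
  | none => none
  | some i =>
      some ⟨Function.update Q.tape Q.head i.w,
        if i.d then Q.head + 1 else Q.head - 1, i.t⟩

/-- The configuration after `n` steps when started in state `μ1` on the blank tape. -/
def TM.run (T : TM) : ℕ → Option (Cfg T)
  | 0 => some ⟨fun _ => false, 0, 1⟩
  | n + 1 => (T.run n).bind T.step

/-- `T` halts (started in the initial state `μ1` on the empty, all-zero, tape). -/
def TM.Halts (T : TM) : Prop := ∃ (n : ℕ) (Q : Cfg T), T.run n = some Q ∧ Q.state = 0

/-- The universe of the algebra `A'(T)`:
`0`, `U = {1,2,H}`, `W = {C, D, ∂C, ∂D}`, and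
`V = {C_ir^s, D_ir^s, M_i^r}` together with their barred versions. -/
inductive El (T : TM) : Type
  | zero
  | one
  | two
  | H
  | C (bar : Bool)
  | D (bar : Bool)
  | Cv (bar : Bool) (i : Fin (T.states + 1)) (r s : Bool)
  | Dv (bar : Bool) (i : Fin (T.states + 1)) (r s : Bool)
  | Mv (bar : Bool) (i : Fin (T.states + 1)) (r : Bool)
  deriving DecidableEq

namespace El

variable {T : TM}

/-- The bar involution `∂`, defined (only) on `V ∪ W`. -/
def bar : El T → Option (El T)
  | C b => some (C (!b))
  | D b => some (D (!b))
  | Cv b i r s => some (Cv (!b) i r s)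
  | Dv b i r s => some (Dv (!b) i r s)
  | Mv b i r => some (Mv (!b) i r)
  | _ => none

/-- The flat (height 1) semilattice meet with bottom element `0`. -/
def meet (x y : El T) : El T := if x = y then x else zero

/-- Join in the flat semilattice, for comparable elements. -/
def fjoin (x y : El T) : El T := if x = zero then y else x

/-- The nonassociative multiplication: `2·D = H·C = D`, `1·C = C`,
`2·∂D = H·∂C = ∂D`, `1·∂C = ∂C`, and `0` otherwise. -/
def mul : El T → El T → El T
  | two, D b => D b
  | H, C b => D b
  | one, C b => C b
  | _, _ => zero

/-- `J(x,y,z) = (x ∧ ∂y ∧ z) ∨ (x ∧ y)`. -/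
def opJ (x y z : El T) : El T :=
  if x = y then x else if bar y = some x then meet x z else zero

/-- `J'(x,y,z) = (x ∧ y ∧ z) ∨ (x ∧ ∂y)`. -/
def opJ' (x y z : El T) : El T :=
  if x = y then meet x z else if bar y = some x then x else zero

/-- `K(x,y,z) = (∂x ∧ y) ∨ (∂x ∧ ∂y ∧ z) ∨ (x ∧ y ∧ z)`. -/
def opK (x y z : El T) : El T :=
  if bar y = some x then y
  else if x = y ∧ bar z = some x then z
  else meet x (meet y z)

/-- `(x ∧ y) ∨ (x ∧ z)`. -/
def sCore (x y z : El T) : El T := fjoin (meet x y) (meet x z)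

/-- Membership in `V₀` (the elements of `V` with state index `0`). -/
def isV0 : El T → Bool
  | Cv _ i _ _ => decide (i = 0)
  | Dv _ i _ _ => decide (i = 0)
  | Mv _ i _ => decide (i = 0)
  | _ => false

/-- `S₀(u,x,y,z) = (x∧y) ∨ (x∧z)` if `u ∈ V₀`, else `0`. -/
def opS0 (u x y z : El T) : El T := if isV0 u then sCore x y z else zero

/-- `S₁(u,x,y,z) = (x∧y) ∨ (x∧z)` if `u ∈ {1,2}`, else `0`. -/
def opS1 (u x y z : El T) : El T := if u = one ∨ u = two then sCore x y z else zero

/-- `S₂(u,v,x,y,z) = (x∧y) ∨ (x∧z)` if `u = ∂v ∈ V ∪ W`, else `0`. -/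
def opS2 (u v x y z : El T) : El T := if bar v = some u then sCore x y z else zero

/-- The operation `T(w,x,y,z)`. -/
def opT (w x y z : El T) : El T :=
  if mul w x = mul y z then
    if w = y ∧ x = z then mul w x
    else if mul w x ≠ zero then (bar (mul w x)).getD zero else zero
  else zero

/-- `I(1) = C₁₀⁰`, `I(H) = M₁⁰`, `I(2) = D₁₀⁰`, and `0` otherwise. -/
def opI : El T → El T
  | one => Cv false 1 false false
  | H => Mv false 1 false
  | two => Dv false 1 false false
  | _ => zero

/-- The left-moving machine operation `L_{irt}` attached to an instruction
`(μ_i, r, s, L, μ_j)` and `t ∈ {0,1}`. -/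
def opL (ins : Instr T.states) (t : Bool) : El T → El T → El T → El T
  | one, one, Cv b i r s' => if i = ins.s ∧ r = ins.r then Cv b ins.t t s' else zero
  | H, one, Cv b i r s' => if i = ins.s ∧ r = ins.r ∧ s' = t then Mv b ins.t t else zero
  | two, H, Mv b i r => if i = ins.s ∧ r = ins.r then Dv b ins.t t ins.w else zero
  | two, two, Dv b i r s' => if i = ins.s ∧ r = ins.r then Dv b ins.t t s' else zero
  | _, _, _ => zero

/-- The right-moving machine operation `R_{irt}` attached to an instruction
`(μ_i, r, s, R, μ_j)` and `t ∈ {0,1}`. -/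
def opR (ins : Instr T.states) (t : Bool) : El T → El T → El T → El T
  | one, one, Cv b i r s' => if i = ins.s ∧ r = ins.r then Cv b ins.t t s' else zero
  | H, one, Mv b i r => if i = ins.s ∧ r = ins.r then Cv b ins.t t ins.w else zero
  | two, H, Dv b i r s' => if i = ins.s ∧ r = ins.r ∧ s' = t then Mv b ins.t t else zero
  | two, two, Dv b i r s' => if i = ins.s ∧ r = ins.r then Dv b ins.t t s' else zero
  | _, _, _ => zero

/-- The machine operation (from `𝓛 ∪ 𝓡`) attached to an instruction. -/
def mach (ins : Instr T.states) (t : Bool) (x y u : El T) : El T :=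
  if ins.d then opR ins t x y u else opL ins t x y u

/-- The relation `≺` on `{1,2,H}`. -/
def prec : El T → El T → Bool
  | two, two => true
  | two, H => true
  | one, one => true
  | _, _ => false

/-- The operation `U_F^1`. -/
def opU1 (F : El T → El T → El T → El T) (x y z u : El T) : El T :=
  if prec x z then
    if y = z then F x y u
    else if F x y u ≠ zero then (bar (F x y u)).getD zero else zero
  else zero

/-- The operation `U_F^0`. -/
def opU0 (F : El T → El T → El T → El T) (x y z u : El T) : El T :=
  if prec x z then
    if x = y then F y z u
    else if F y z u ≠ zero then (bar (F y z u)).getD zero else zero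
  else zero

end El

/-- The unary operation symbols of `A'(T)`. -/
inductive Ops1 : Type
  | I

/-- The binary operation symbols of `A'(T)`. -/
inductive Ops2 : Type
  | meet
  | mul

/-- The ternary operation symbols of `A'(T)`: `J`, `J'`, `K` and the machine
operations from `𝓛 ∪ 𝓡` (one for each instruction and each `t ∈ {0,1}`). -/
inductive Ops3 (T : TM) : Type
  | J
  | J'
  | K
  | mach (k : Fin T.instr.length) (t : Bool)

/-- The 4-ary operation symbols of `A'(T)`: `S₀`, `S₁`, `T` and the operations
`U_F^1, U_F^0` for `F ∈ 𝓛 ∪ 𝓡`. -/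
inductive Ops4 (T : TM) : Type
  | S0
  | S1
  | T
  | u1 (k : Fin T.instr.length) (t : Bool)
  | u0 (k : Fin T.instr.length) (t : Bool)

/-- The 5-ary operation symbols of `A'(T)`: `S₂`. -/
inductive Ops5 : Type
  | S2

/-- The signature (similarity type) of the algebra `A'(T)`; the constant symbol
(of arity 0) denotes the bottom element `0`. -/
def Sig (T : TM) : FirstOrder.Language.{0, 0} where
  Functions n :=
    match n with
    | 0 => PUnit
    | 1 => Ops1
    | 2 => Ops2
    | 3 => Ops3 T
    | 4 => Ops4 T
    | 5 => Ops5
    | _ => PEmpty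
  Relations _ := PEmpty


/-- The constant symbol `0` as an element of the signature. -/
def fn0 (T : TM) : (Sig T).Functions 0 := PUnit.unit
/-- Unary operation symbols as elements of the signature. -/
def fn1 (T : TM) (o : Ops1) : (Sig T).Functions 1 := o
/-- Binary operation symbols as elements of the signature. -/
def fn2 (T : TM) (o : Ops2) : (Sig T).Functions 2 := o
/-- Ternary operation symbols as elements of the signature. -/
def fn3 (T : TM) (o : Ops3 T) : (Sig T).Functions 3 := o
/-- 4-ary operation symbols as elements of the signature. -/
def fn4 (T : TM) (o : Ops4 T) : (Sig T).Functions 4 := o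
/-- 5-ary operation symbols as elements of the signature. -/
def fn5 (T : TM) (o : Ops5) : (Sig T).Functions 5 := o

/-- The algebra `A'(T)`: the interpretation of the signature `Sig T` on `El T`. -/
instance elStructure (T : TM) : (Sig T).Structure (El T) where
  funMap {n} f v :=
    match n, f, v with
    | 0, _, _ => El.zero
    | 1, Ops1.I, v => El.opI (v 0)
    | 2, Ops2.meet, v => El.meet (v 0) (v 1)
    | 2, Ops2.mul, v => El.mul (v 0) (v 1)
    | 3, Ops3.J, v => El.opJ (v 0) (v 1) (v 2)
    | 3, Ops3.J', v => El.opJ' (v 0) (v 1) (v 2)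
    | 3, Ops3.K, v => El.opK (v 0) (v 1) (v 2)
    | 3, Ops3.mach k t, v => El.mach (T.instr.get k) t (v 0) (v 1) (v 2)
    | 4, Ops4.S0, v => El.opS0 (v 0) (v 1) (v 2) (v 3)
    | 4, Ops4.S1, v => El.opS1 (v 0) (v 1) (v 2) (v 3)
    | 4, Ops4.T, v => El.opT (v 0) (v 1) (v 2) (v 3)
    | 4, Ops4.u1 k t, v => El.opU1 (El.mach (T.instr.get k) t) (v 0) (v 1) (v 2) (v 3)
    | 4, Ops4.u0 k t, v => El.opU0 (El.mach (T.instr.get k) t) (v 0) (v 1) (v 2) (v 3)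
    | 5, Ops5.S2, v => El.opS2 (v 0) (v 1) (v 2) (v 3) (v 4)
    | _ + 6, f, _ => f.elim
  RelMap {n} r _ := r.elim

/-- The product algebra `A'(T)^ι`. -/
instance piStructure (T : TM) (ι : Type*) : (Sig T).Structure (ι → El T) where
  funMap f v l := Language.Structure.funMap f fun i => v i l
  RelMap r _ := r.elim

open Language

/-- A congruence of an algebra: an equivalence relation compatible with all the
fundamental operations. -/
def IsCongruence (L : Language) (B : Type*) [L.Structure B] (ρ : B → B → Prop) : Prop :=
  Equivalence ρ ∧
    ∀ {n : ℕ} (f : L.Functions n) (v w : Fin n → B),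
      (∀ i, ρ (v i) (w i)) → ρ (Structure.funMap f v) (Structure.funMap f w)

/-- `PrinCg L B a b x y` says that `(x, y)` lies in the principal congruence
`Cg^B(a,b)` generated by the pair `(a,b)`. -/
def PrinCg (L : Language) (B : Type*) [L.Structure B] (a b x y : B) : Prop :=
  ∀ ρ : B → B → Prop, IsCongruence L B ρ → ρ a b → ρ x y

/-- `B` satisfies every identity holding in `A`; by Birkhoff's theorem this says
exactly that `B` belongs to the variety generated by `A`. -/
def ModelsIdsOf (L : Language) (A : Type*) [L.Structure A] (B : Type*) [L.Structure B] : Prop :=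
  ∀ t₁ t₂ : L.Term ℕ,
    (∀ v : ℕ → A, t₁.realize v = t₂.realize v) →
    ∀ v : ℕ → B, t₁.realize v = t₂.realize v

/-- Membership in the variety `V(A'(T))` generated by `A'(T)`. -/
def InVariety (T : TM) (B : Type*) [(Sig T).Structure B] : Prop :=
  ModelsIdsOf (Sig T) (El T) B

/-- The variety `V(A'(T))` as a class of algebras. -/
def VClass (T : TM) : ∀ (B : Type) [inst : (Sig T).Structure B], Prop :=
  fun B inst => @InVariety T B inst

/-- `φ(w,x,y,z)` is a congruence formula for the class `C`: in every member of `C`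
it implies `(w,x) ∈ Cg(y,z)`. -/
def IsCongruenceFormula (L : Language) (C : ∀ (B : Type) [inst : L.Structure B], Prop)
    (φ : L.Formula (Fin 4)) : Prop :=
  ∀ (B : Type) [L.Structure B], C B → ∀ w x y z : B,
    φ.Realize ![w, x, y, z] → PrinCg L B y z w x

/-- The class `C` has definable principal subcongruences: there are congruence
formulas `Γ` and `ψ` such that any pair `a ≠ b` admits a subpair `c ≠ d` of
`Cg(a,b)` (witnessed by `Γ`) whose principal congruence is defined by `ψ`. -/
def HasDPSC (L : Language) (C : ∀ (B : Type) [inst : L.Structure B], Prop) : Prop :=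
  ∃ Γ ψ : L.Formula (Fin 4),
    IsCongruenceFormula L C Γ ∧ IsCongruenceFormula L C ψ ∧
      ∀ (B : Type) [L.Structure B], C B → ∀ a b : B, a ≠ b →
        ∃ c d : B, c ≠ d ∧ Γ.Realize ![c, d, a, b] ∧
          ∀ x y : B, PrinCg L B c d x y ↔ ψ.Realize ![x, y, c, d]

/-- The variety `V(A'(T))` is axiomatized by a finite set of identities
(which hold in `A'(T)`). -/
def FinitelyBased (T : TM) : Prop :=
  ∃ E : List ((Sig T).Term ℕ × (Sig T).Term ℕ),
    (∀ e ∈ E, ∀ v : ℕ → El T, e.1.realize v = e.2.realize v) ∧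
    ∀ (B : Type) [(Sig T).Structure B],
      (InVariety T B ↔ ∀ e ∈ E, ∀ v : ℕ → B, e.1.realize v = e.2.realize v)

/-- An algebra is subdirectly irreducible iff some pair `a ≠ b` (generating the
monolith) belongs to every nontrivial congruence. -/
def IsSI (L : Language) (B : Type*) [L.Structure B] : Prop :=
  ∃ a b : B, a ≠ b ∧ ∀ c d : B, c ≠ d → PrinCg L B c d a b

/-- An algebra is finitely subdirectly irreducible iff any two nontrivial principal
congruences have nontrivial intersection. -/
def IsFSI (L : Language) (B : Type*) [L.Structure B] : Prop :=
  ∀ a b c d : B, a ≠ b → c ≠ d →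
    ∃ x y : B, x ≠ y ∧ PrinCg L B a b x y ∧ PrinCg L B c d x y

/-- The residual bound of `V(A'(T))` is finite (`κ(A'(T)) < ω`): there is a finite
bound strictly larger than the cardinality of every subdirectly irreducible member. -/
def ResBoundFinite (T : TM) : Prop :=
  ∃ N : ℕ, ∀ (B : Type) [(Sig T).Structure B],
    InVariety T B → IsSI (Sig T) B → Finite B ∧ Nat.card B < N

/-- Membership in `HS(A'(T))`: homomorphic images of subalgebras of `A'(T)`. -/
def InHS (T : TM) (B : Type*) [(Sig T).Structure B] : Prop :=
  ∃ (S : (Sig T).Substructure (El T)) (f : S →[Sig T] B), Function.Surjective f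

/-- The constant `0` of an algebra in the signature of `A'(T)`. -/
def zeroB (T : TM) (B : Type*) [(Sig T).Structure B] : B :=
  Structure.funMap (fn0 T) (fun i : Fin 0 => i.elim0)

/-- The meet operation of an algebra in the signature of `A'(T)`. -/
def meetB (T : TM) {B : Type*} [(Sig T).Structure B] (x y : B) : B :=
  Structure.funMap (fn2 T Ops2.meet) ![x, y]

/-- The multiplication of an algebra in the signature of `A'(T)`. -/
def mulB (T : TM) {B : Type*} [(Sig T).Structure B] (x y : B) : B :=
  Structure.funMap (fn2 T Ops2.mul) ![x, y]

/-- The operation `I` of an algebra in the signature of `A'(T)`. -/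
def IB (T : TM) {B : Type*} [(Sig T).Structure B] (x : B) : B :=
  Structure.funMap (fn1 T Ops1.I) ![x]

/-- The operation `J` of an algebra in the signature of `A'(T)`. -/
def JB (T : TM) {B : Type*} [(Sig T).Structure B] (x y z : B) : B :=
  Structure.funMap (fn3 T Ops3.J) ![x, y, z]

/-- The operation `J'` of an algebra in the signature of `A'(T)`. -/
def J'B (T : TM) {B : Type*} [(Sig T).Structure B] (x y z : B) : B :=
  Structure.funMap (fn3 T Ops3.J') ![x, y, z]

/-- The operation `K` of an algebra in the signature of `A'(T)`. -/
def KB (T : TM) {B : Type*} [(Sig T).Structure B] (x y z : B) : B :=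
  Structure.funMap (fn3 T Ops3.K) ![x, y, z]

/-- The operation `S₂` of an algebra in the signature of `A'(T)`. -/
def S2B (T : TM) {B : Type*} [(Sig T).Structure B] (u v x y z : B) : B :=
  Structure.funMap (fn5 T Ops5.S2) ![u, v, x, y, z]

/-- The term `e₂(m,n,x) = S₂(m,n,x,x,x)`. -/
def e2B (T : TM) {B : Type*} [(Sig T).Structure B] (m n x : B) : B :=
  S2B T m n x x x

/-- The semilattice order of an algebra in the signature of `A'(T)`:
`x ≤ y` iff `x ∧ y = x`. -/
def leB (T : TM) {B : Type*} [(Sig T).Structure B] (x y : B) : Prop :=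
  meetB T x y = x

/-- Parameters `m̄ ∈ B² ∪ B` for one of the operations `S₀`, `S₁`, `S₂`. -/
inductive SIdx (B : Type*) : Type _
  | s0 (m : B)
  | s1 (m : B)
  | s2 (m n : B)

/-- Which of `S₀, S₁, S₂` a parameter tuple belongs to. -/
def SIdx.tag {B : Type*} : SIdx B → Fin 3
  | .s0 _ => 0
  | .s1 _ => 1
  | .s2 _ _ => 2

/-- `SApp T σ x y z` is `S_i(m̄, x, y, z)` where `σ` packages `i` and `m̄`. -/
def SApp (T : TM) {B : Type*} [(Sig T).Structure B] : SIdx B → B → B → B → B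
  | .s0 m, x, y, z => Structure.funMap (fn4 T Ops4.S0) ![m, x, y, z]
  | .s1 m, x, y, z => Structure.funMap (fn4 T Ops4.S1) ![m, x, y, z]
  | .s2 m n, x, y, z => S2B T m n x y z

/-- `eApp T σ x` is the term function `e_i(m̄, x) = S_i(m̄, x, x, x)`. -/
def eApp (T : TM) {B : Type*} [(Sig T).Structure B] (σ : SIdx B) (x : B) : B :=
  SApp T σ x x x

/-- `Range(S_j)`: the set of values of the operation `S_j` on `B`. -/
def SRange (T : TM) (B : Type*) [(Sig T).Structure B] (j : Fin 3) : Set B :=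
  {w | ∃ (σ : SIdx B) (x y z : B), σ.tag = j ∧ SApp T σ x y z = w}

/-- A unary polynomial of `B`: a term function in one variable with parameters
from `B`. -/
def IsPolynomial (T : TM) {B : Type*} [(Sig T).Structure B] (f : B → B) : Prop :=
  ∃ t : (Sig T).Term (B ⊕ Unit), ∀ x : B, f x = t.realize (Sum.elim id fun _ => x)

/-- A fundamental translation: a unary polynomial obtained from a fundamental
operation by fixing all arguments but one. -/
def IsFundTranslation (T : TM) {B : Type*} [(Sig T).Structure B] (g : B → B) : Prop :=
  ∃ (n : ℕ) (F : (Sig T).Functions n) (i : Fin n) (v : Fin n → B),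
    g = fun x => Structure.funMap F (Function.update v i x)

/-- A polynomial generated by fundamental translations: a composition of finitely
many fundamental translations. -/
inductive IsTransPoly (T : TM) {B : Type*} [(Sig T).Structure B] : (B → B) → Prop
  | id : IsTransPoly T id
  | comp {g f : B → B} : IsFundTranslation T g → IsTransPoly T f → IsTransPoly T (g ∘ f)

end McKenzie
namespace McKenzie
namespace El

variable {T : TM}

lemma bar_flip {x y : El T} (h : bar y = some x) : bar x = some y := by
  cases y <;> simp [bar] at h <;> subst h <;> simp [bar]

lemma bar_ne {x y : El T} (h : bar y = some x) : x ≠ y := by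
  cases y <;> simp [bar] at h <;> subst h <;> simp

lemma bar_ne_some_zero {x : El T} : bar x ≠ some zero := by
  cases x <;> simp [bar]

lemma meet_self (x : El T) : meet x x = x := by simp [meet]

lemma meet_zero (x : El T) : meet x zero = zero := by
  unfold meet; split <;> simp_all

lemma zero_meet (x : El T) : meet zero x = zero := by
  unfold meet; split <;> simp_all

lemma sCore_same (z : El T) : sCore z z z = z := by
  simp [sCore, fjoin, meet_self]

lemma meet_cases (x y : El T) : meet x y = x ∨ meet x y = zero := by
  unfold meet; split <;> simp

lemma meet_eq_zero_of_ne {x y : El T} (h : x ≠ y) : meet x y = zero := by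
  unfold meet; split <;> simp_all

-- L2 : J(x,y,0) = x ∧ y
lemma L2 (x y : El T) : opJ x y zero = meet x y := by
  unfold opJ
  by_cases h : x = y
  · simp [h, meet_self]
  · simp [h, meet_eq_zero_of_ne h]
    intro hb
    exact meet_zero x

-- L1 : J(x,y,S2(x,y,z,z,z)) = J(x,y,z)
lemma L1 (x y z : El T) : opJ x y (opS2 x y z z z) = opJ x y z := by
  unfold opJ opS2
  by_cases h : x = y
  · simp [h]
  · simp [h]
    by_cases hb : bar y = some x
    · simp [hb, sCore_same]
    · simp [hb]

end El
end McKenzie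
namespace McKenzie
namespace El

variable {T : TM}

-- helper: meet x (meet y z) is x or zero
lemma meet3_cases (x y z : El T) :
    meet x (meet y z) = x ∨ meet x (meet y z) = zero := by
  rcases meet_cases y z with h | h <;> rw [h]
  · exact meet_cases x y
  · exact Or.inr (meet_zero x)

lemma bar_ne_self (y : El T) : bar y ≠ some y :=
  fun hc => absurd rfl (bar_ne hc)

lemma meet3_eq_zero_of_ne {x y : El T} (h : x ≠ y) (z : El T) :
    meet x (meet y z) = zero := by
  rcases meet_cases y z with h' | h' <;> rw [h']
  · exact meet_eq_zero_of_ne h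
  · exact meet_zero x

-- J(m, w, s) = m  whenever m = x or m = 0 with suitable guards; ad hoc below

-- L3 : K(x,y,z) = J(K(x,y,z), x, S2(K,x,K,K,K))
lemma L3 (x y z : El T) :
    opJ (opK x y z) x (opS2 (opK x y z) x (opK x y z) (opK x y z) (opK x y z))
      = opK x y z := by
  by_cases h1 : bar y = some x
  · have hk : opK x y z = y := by unfold opK; simp [h1]
    rw [hk]
    have hxy : x ≠ y := bar_ne h1
    have hfy : bar x = some y := bar_flip h1
    unfold opJ opS2
    simp [Ne.symm hxy, hfy, sCore_same, meet_self]
  · by_cases h2 : x = y ∧ bar z = some x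
    · have hk : opK x y z = z := by unfold opK; simp [h1, h2, bar_ne_self]
      rw [hk]
      have hxz : x ≠ z := bar_ne h2.2
      have hfz : bar x = some z := bar_flip h2.2
      unfold opJ opS2
      simp [Ne.symm hxz, hfz, sCore_same, meet_self]
    · have hk : opK x y z = meet x (meet y z) := by unfold opK; simp [h1, h2]
      rw [hk]
      rcases meet3_cases x y z with hm | hm <;> rw [hm]
      · unfold opJ; simp
      · unfold opJ opS2
        by_cases hx0 : x = zero
        · simp [hx0]
        · simp [Ne.symm hx0, bar_ne_some_zero]

-- L4 : K(x,y,z) = J(K(x,y,z), y, S2(K,x,K,K,K))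
lemma L4 (x y z : El T) :
    opJ (opK x y z) y (opS2 (opK x y z) x (opK x y z) (opK x y z) (opK x y z))
      = opK x y z := by
  by_cases h1 : bar y = some x
  · have hk : opK x y z = y := by unfold opK; simp [h1]
    rw [hk]
    unfold opJ; simp
  · by_cases h2 : x = y ∧ bar z = some x
    · have hk : opK x y z = z := by unfold opK; simp [h1, h2, bar_ne_self]
      rw [hk]
      have hxz : x ≠ z := bar_ne h2.2
      have hfz : bar x = some z := bar_flip h2.2
      have hfzy : bar y = some z := by rw [← h2.1]; exact hfz
      unfold opJ opS2
      simp [show z ≠ y from by rw [← h2.1]; exact Ne.symm hxz, hfzy, hfz, sCore_same, meet_self]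
    · have hk : opK x y z = meet x (meet y z) := by unfold opK; simp [h1, h2]
      rw [hk]
      rcases meet3_cases x y z with hm | hm <;> rw [hm]
      · -- m = x : show opJ x y s = x ; since meet x (meet y z) = x we get x = y or x = zero
        unfold opJ opS2
        by_cases hxy : x = y
        · simp [hxy]
        · have : meet x (meet y z) = zero := meet3_eq_zero_of_ne hxy z
          rw [hm] at this; subst this
          by_cases hy0 : y = zero
          · simp [hy0]
          · simp [Ne.symm hy0, bar_ne_some_zero]
      · unfold opJ opS2
        by_cases hy0 : y = zero
        · simp [hy0]
        · simp [Ne.symm hy0, bar_ne_some_zero]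

-- L5 : K(x,y,z) ∧ (x∧y) = x∧(y∧z)
lemma L5 (x y z : El T) :
    meet (opK x y z) (meet x y) = meet x (meet y z) := by
  by_cases h1 : bar y = some x
  · have hk : opK x y z = y := by unfold opK; simp [h1]
    have hxy : x ≠ y := bar_ne h1
    rw [hk, meet_eq_zero_of_ne hxy, meet_zero, meet3_eq_zero_of_ne hxy]
  · by_cases h2 : x = y ∧ bar z = some x
    · have hk : opK x y z = z := by unfold opK; simp [h1, h2, bar_ne_self]
      have hxz : x ≠ z := bar_ne h2.2
      obtain ⟨hxy, _⟩ := h2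
      subst hxy
      rw [hk, meet_self, meet_eq_zero_of_ne (Ne.symm hxz),
        meet_eq_zero_of_ne hxz, meet_zero]
    · have hk : opK x y z = meet x (meet y z) := by unfold opK; simp [h1, h2]
      rw [hk]
      rcases meet3_cases x y z with hm | hm <;> rw [hm]
      · -- meet x (meet y z) = x
        by_cases hxy : x = y
        · subst hxy; simp [meet_self]
        · have hx0 : x = zero := by
            rw [meet3_eq_zero_of_ne hxy z] at hm; exact hm.symm
          subst hx0; simp [zero_meet]
      · rw [zero_meet]

-- L6 : J'(x,y,z) ∧ x = J'(x,y,z)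
lemma L6 (x y z : El T) : meet (opJ' x y z) x = opJ' x y z := by
  unfold opJ'
  by_cases h : x = y
  · simp [h]
    rcases meet_cases y z with hm | hm <;> rw [hm]
    · exact meet_self y
    · exact zero_meet y
  · simp [h]
    by_cases hb : bar y = some x
    · simp [hb, meet_self]
    · simp [hb, zero_meet]

-- L7 : J'(x,y,z) = J(J'(x,y,z), y, S2(x,y,x,x,x))
lemma L7 (x y z : El T) :
    opJ (opJ' x y z) y (opS2 x y x x x) = opJ' x y z := by
  by_cases h : x = y
  · have hj : opJ' x y z = meet x z := by unfold opJ'; simp [h]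
    have hs : opS2 x y x x x = zero := by
      unfold opS2
      have : ¬ bar y = some x := by
        rw [← h]; intro hc; exact bar_ne hc rfl
      simp [this]
    rw [hj, hs]
    rcases meet_cases x z with hm | hm <;> rw [hm]
    · subst h; unfold opJ; simp
    · unfold opJ
      by_cases hy0 : y = zero
      · simp [hy0]
      · simp [Ne.symm hy0, bar_ne_some_zero]
  · by_cases hb : bar y = some x
    · have hj : opJ' x y z = x := by unfold opJ'; simp [h, hb]
      have hs : opS2 x y x x x = x := by unfold opS2; simp [hb, sCore_same]
      rw [hj, hs]
      unfold opJ
      simp [h, hb, meet_self]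
    · have hj : opJ' x y z = zero := by unfold opJ'; simp [h, hb]
      have hs : opS2 x y x x x = zero := by unfold opS2; simp [hb]
      rw [hj, hs]
      unfold opJ
      by_cases hy0 : y = zero
      · simp [hy0]
      · simp [Ne.symm hy0, bar_ne_some_zero]

-- L8 : J'(x,y,z) ∧ (x∧y) = x∧(y∧z)
lemma L8 (x y z : El T) :
    meet (opJ' x y z) (meet x y) = meet x (meet y z) := by
  by_cases h : x = y
  · have hj : opJ' x y z = meet x z := by unfold opJ'; simp [h]
    subst h
    rw [hj, meet_self]
    rcases meet_cases x z with hm | hm <;> rw [hm] <;>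
      simp [meet_self, zero_meet, meet_zero]
  · have hxy0 : meet x y = zero := meet_eq_zero_of_ne h
    rw [hxy0, meet_zero, meet3_eq_zero_of_ne h]

-- L9 : associativity of meet
lemma L9 (x y z : El T) : meet (meet x y) z = meet x (meet y z) := by
  unfold meet
  split_ifs <;> simp_all

end El
end McKenzie
namespace McKenzie

open FirstOrder Language

variable {T : TM}

/-- Term builders -/
private def tv (n : ℕ) : (Sig T).Term ℕ := Term.var n
private def t0 : (Sig T).Term ℕ := Term.func (fn0 T) ![]
private def tMeet (a b : (Sig T).Term ℕ) : (Sig T).Term ℕ :=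
  Term.func (fn2 T Ops2.meet) ![a, b]
private def tJ (a b c : (Sig T).Term ℕ) : (Sig T).Term ℕ :=
  Term.func (fn3 T Ops3.J) ![a, b, c]
private def tJ' (a b c : (Sig T).Term ℕ) : (Sig T).Term ℕ :=
  Term.func (fn3 T Ops3.J') ![a, b, c]
private def tK (a b c : (Sig T).Term ℕ) : (Sig T).Term ℕ :=
  Term.func (fn3 T Ops3.K) ![a, b, c]
private def tS2 (a b c d e : (Sig T).Term ℕ) : (Sig T).Term ℕ :=
  Term.func (fn5 T Ops5.S2) ![a, b, c, d, e]

section Realize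

variable {B : Type*} [(Sig T).Structure B] (v : ℕ → B)

private lemma realize_tv (n : ℕ) : (tv n : (Sig T).Term ℕ).realize v = v n := rfl

private lemma realize_t0 : (t0 : (Sig T).Term ℕ).realize v = zeroB T B := by
  unfold t0 zeroB
  rw [Term.realize_func]
  congr 1
  funext i
  exact i.elim0

private lemma realize_tMeet (a b : (Sig T).Term ℕ) :
    (tMeet a b).realize v = meetB T (a.realize v) (b.realize v) := by
  unfold tMeet meetB
  rw [Term.realize_func]
  congr 1
  funext i
  fin_cases i <;> rfl

private lemma realize_tJ (a b c : (Sig T).Term ℕ) :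
    (tJ a b c).realize v = JB T (a.realize v) (b.realize v) (c.realize v) := by
  unfold tJ JB
  rw [Term.realize_func]
  congr 1
  funext i
  fin_cases i <;> rfl

private lemma realize_tJ' (a b c : (Sig T).Term ℕ) :
    (tJ' a b c).realize v = J'B T (a.realize v) (b.realize v) (c.realize v) := by
  unfold tJ' J'B
  rw [Term.realize_func]
  congr 1
  funext i
  fin_cases i <;> rfl

private lemma realize_tK (a b c : (Sig T).Term ℕ) :
    (tK a b c).realize v = KB T (a.realize v) (b.realize v) (c.realize v) := by
  unfold tK KB
  rw [Term.realize_func]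
  congr 1
  funext i
  fin_cases i <;> rfl

private lemma realize_tS2 (a b c d e : (Sig T).Term ℕ) :
    (tS2 a b c d e).realize v =
      S2B T (a.realize v) (b.realize v) (c.realize v) (d.realize v) (e.realize v) := by
  unfold tS2 S2B
  rw [Term.realize_func]
  congr 1
  funext i
  fin_cases i <;> rfl

end Realize

section ElOps

variable (x y z : El T)

private lemma JB_el : JB T x y z = El.opJ x y z := rfl
private lemma J'B_el : J'B T x y z = El.opJ' x y z := rfl
private lemma KB_el : KB T x y z = El.opK x y z := rfl
private lemma meetB_el : meetB T x y = El.meet x y := rfl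
private lemma zeroB_el : zeroB T (El T) = El.zero := rfl
private lemma S2B_el (u v : El T) : S2B T u v x y z = El.opS2 u v x y z := rfl

end ElOps

end McKenzie
namespace McKenzie

open FirstOrder Language

section BLemmas

variable {T : TM} {B : Type*} [(Sig T).Structure B] (hB : InVariety T B)

include hB

/-- J(a,b,0) = a ∧ b in B. -/
private lemma BJ0 (a b : B) : JB T a b (zeroB T B) = meetB T a b := by
  have h := hB (tJ (tv 0) (tv 1) t0) (tMeet (tv 0) (tv 1))
    (fun v => by
      simp only [realize_tJ, realize_tMeet, realize_t0, realize_tv,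
        JB_el, meetB_el, zeroB_el]
      exact El.L2 _ _)
    (fun n => match n with | 0 => a | 1 => b | _ => a)
  simpa only [realize_tJ, realize_tMeet, realize_t0, realize_tv] using h

/-- J(x,y,S2(x,y,z,z,z)) = J(x,y,z) in B. -/
private lemma BJ1 (x y z : B) :
    JB T x y (S2B T x y z z z) = JB T x y z := by
  have h := hB (tJ (tv 0) (tv 1) (tS2 (tv 0) (tv 1) (tv 2) (tv 2) (tv 2)))
    (tJ (tv 0) (tv 1) (tv 2))
    (fun v => by
      simp only [realize_tJ, realize_tS2, realize_tv, JB_el, S2B_el]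
      exact El.L1 _ _ _)
    (fun n => match n with | 0 => x | 1 => y | _ => z)
  simpa only [realize_tJ, realize_tS2, realize_tv] using h

/-- L3 in B. -/
private lemma BK1 (x y z : B) :
    JB T (KB T x y z) x
      (S2B T (KB T x y z) x (KB T x y z) (KB T x y z) (KB T x y z))
      = KB T x y z := by
  have h := hB
    (tJ (tK (tv 0) (tv 1) (tv 2)) (tv 0)
      (tS2 (tK (tv 0) (tv 1) (tv 2)) (tv 0) (tK (tv 0) (tv 1) (tv 2))
        (tK (tv 0) (tv 1) (tv 2)) (tK (tv 0) (tv 1) (tv 2))))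
    (tK (tv 0) (tv 1) (tv 2))
    (fun v => by
      simp only [realize_tJ, realize_tS2, realize_tK, realize_tv,
        JB_el, S2B_el, KB_el]
      exact El.L3 _ _ _)
    (fun n => match n with | 0 => x | 1 => y | _ => z)
  simpa only [realize_tJ, realize_tS2, realize_tK, realize_tv] using h

/-- L4 in B. -/
private lemma BK2 (x y z : B) :
    JB T (KB T x y z) y
      (S2B T (KB T x y z) x (KB T x y z) (KB T x y z) (KB T x y z))
      = KB T x y z := by
  have h := hB
    (tJ (tK (tv 0) (tv 1) (tv 2)) (tv 1)
      (tS2 (tK (tv 0) (tv 1) (tv 2)) (tv 0) (tK (tv 0) (tv 1) (tv 2))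
        (tK (tv 0) (tv 1) (tv 2)) (tK (tv 0) (tv 1) (tv 2))))
    (tK (tv 0) (tv 1) (tv 2))
    (fun v => by
      simp only [realize_tJ, realize_tS2, realize_tK, realize_tv,
        JB_el, S2B_el, KB_el]
      exact El.L4 _ _ _)
    (fun n => match n with | 0 => x | 1 => y | _ => z)
  simpa only [realize_tJ, realize_tS2, realize_tK, realize_tv] using h

/-- L5 in B. -/
private lemma BK5 (x y z : B) :
    meetB T (KB T x y z) (meetB T x y) = meetB T x (meetB T y z) := by
  have h := hB
    (tMeet (tK (tv 0) (tv 1) (tv 2)) (tMeet (tv 0) (tv 1)))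
    (tMeet (tv 0) (tMeet (tv 1) (tv 2)))
    (fun v => by
      simp only [realize_tMeet, realize_tK, realize_tv, meetB_el, KB_el]
      exact El.L5 _ _ _)
    (fun n => match n with | 0 => x | 1 => y | _ => z)
  simpa only [realize_tMeet, realize_tK, realize_tv] using h

/-- L6 in B. -/
private lemma BJ'6 (x y z : B) :
    meetB T (J'B T x y z) x = J'B T x y z := by
  have h := hB
    (tMeet (tJ' (tv 0) (tv 1) (tv 2)) (tv 0))
    (tJ' (tv 0) (tv 1) (tv 2))
    (fun v => by
      simp only [realize_tMeet, realize_tJ', realize_tv, meetB_el, J'B_el]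
      exact El.L6 _ _ _)
    (fun n => match n with | 0 => x | 1 => y | _ => z)
  simpa only [realize_tMeet, realize_tJ', realize_tv] using h

/-- L7 in B. -/
private lemma BJ'7 (x y z : B) :
    JB T (J'B T x y z) y (S2B T x y x x x) = J'B T x y z := by
  have h := hB
    (tJ (tJ' (tv 0) (tv 1) (tv 2)) (tv 1)
      (tS2 (tv 0) (tv 1) (tv 0) (tv 0) (tv 0)))
    (tJ' (tv 0) (tv 1) (tv 2))
    (fun v => by
      simp only [realize_tJ, realize_tJ', realize_tS2, realize_tv,
        JB_el, J'B_el, S2B_el]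
      exact El.L7 _ _ _)
    (fun n => match n with | 0 => x | 1 => y | _ => z)
  simpa only [realize_tJ, realize_tJ', realize_tS2, realize_tv] using h

/-- L8 in B. -/
private lemma BJ'8 (x y z : B) :
    meetB T (J'B T x y z) (meetB T x y) = meetB T x (meetB T y z) := by
  have h := hB
    (tMeet (tJ' (tv 0) (tv 1) (tv 2)) (tMeet (tv 0) (tv 1)))
    (tMeet (tv 0) (tMeet (tv 1) (tv 2)))
    (fun v => by
      simp only [realize_tMeet, realize_tJ', realize_tv, meetB_el, J'B_el]
      exact El.L8 _ _ _)
    (fun n => match n with | 0 => x | 1 => y | _ => z)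
  simpa only [realize_tMeet, realize_tJ', realize_tv] using h

/-- associativity of meet in B. -/
private lemma Bassoc (x y z : B) :
    meetB T (meetB T x y) z = meetB T x (meetB T y z) := by
  have h := hB
    (tMeet (tMeet (tv 0) (tv 1)) (tv 2))
    (tMeet (tv 0) (tMeet (tv 1) (tv 2)))
    (fun v => by
      simp only [realize_tMeet, realize_tv, meetB_el]
      exact El.L9 _ _ _)
    (fun n => match n with | 0 => x | 1 => y | _ => z)
  simpa only [realize_tMeet, realize_tv] using h

end BLemmas

end McKenzie

namespace McKenzie

/-- Let `B ∈ V(A'(T))`. If `B ⊨ S₂(u,v,x,y,z) ≈ 0`, then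
`B ⊨ J(x,y,z) ≈ x ∧ y` and `B ⊨ J'(x,y,z) ≈ K(x,y,z) ≈ x ∧ y ∧ z`. -/
theorem J_J'_K_of_S2_eq_zero (T : TM) (B : Type*) [(Sig T).Structure B]
    (hB : InVariety T B)
    (hS2 : ∀ u v x y z : B, S2B T u v x y z = zeroB T B) :
    (∀ x y z : B, JB T x y z = meetB T x y) ∧
    (∀ x y z : B, J'B T x y z = meetB T x (meetB T y z)) ∧
    (∀ x y z : B, KB T x y z = meetB T x (meetB T y z)) := by
  refine ⟨fun x y z => ?_, fun x y z => ?_, fun x y z => ?_⟩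
  · calc JB T x y z = JB T x y (S2B T x y z z z) := (BJ1 hB x y z).symm
      _ = JB T x y (zeroB T B) := by rw [hS2]
      _ = meetB T x y := BJ0 hB x y
  · -- J'
    have e1 : meetB T (J'B T x y z) x = J'B T x y z := BJ'6 hB x y z
    have e2 : meetB T (J'B T x y z) y = J'B T x y z := by
      have h := BJ'7 hB x y z
      rw [hS2, BJ0 hB] at h
      exact h
    calc J'B T x y z = meetB T (J'B T x y z) y := e2.symm
      _ = meetB T (meetB T (J'B T x y z) x) y := by rw [e1]
      _ = meetB T (J'B T x y z) (meetB T x y) := Bassoc hB _ _ _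
      _ = meetB T x (meetB T y z) := BJ'8 hB x y z
  · -- K
    have e1 : meetB T (KB T x y z) x = KB T x y z := by
      have h := BK1 hB x y z
      rw [hS2, BJ0 hB] at h
      exact h
    have e2 : meetB T (KB T x y z) y = KB T x y z := by
      have h := BK2 hB x y z
      rw [hS2, BJ0 hB] at h
      exact h
    calc KB T x y z = meetB T (KB T x y z) y := e2.symm
      _ = meetB T (meetB T (KB T x y z) x) y := by rw [e1]
      _ = meetB T (KB T x y z) (meetB T x y) := Bassoc hB _ _ _
      _ = meetB T x (meetB T y z) := BK5 hB x y z

end McKenzie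
end

section
/- Let L be an index set, let B be a subalgebra of A'(T)^L, and let C ⊆ B be such that (1) every c ∈ C is nowhere 0 (c(l) ≠ 0 for all l ∈ L), and (2) if c ∈ C and a ∈ B satisfy c(l) ∈ {a(l), ∂a(l)} for all l ∈ L, then c = a. If f1(x), f2(x), f3(x) are unary polynomials of B such that each f_i is either constant or satisfies f_i^{-1}(C) ⊆ C, then the polynomial f(x) = K(f1(x), f2(x), f3(x)) is either constant or satisfies f^{-1}(C) ⊆ C. -/
open FirstOrder

namespace McKenzie

theorem bar_symm {T : TM} {x y : El T} (h : El.bar x = some y) : El.bar y = some x := by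
  cases x <;> simp_all [El.bar] <;> cases h <;> simp [El.bar]

theorem bar_ne_self {T : TM} (x : El T) : El.bar x ≠ some x := by
  cases x <;> simp [El.bar] <;> intro h <;> simp_all

theorem opK_first_second {T : TM} (a b z : El T) (h : El.opK a b z ≠ El.zero) :
    (El.opK a b z = a ∨ El.bar a = some (El.opK a b z)) ∧
    (El.opK a b z = b ∨ El.bar b = some (El.opK a b z)) := by
  unfold El.opK at *
  split_ifs at h ⊢ with h1 h2
  · exact ⟨Or.inr (bar_symm h1), Or.inl rfl⟩
  · obtain ⟨hab, hz⟩ := h2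
    exact ⟨Or.inr (bar_symm hz), Or.inr (hab ▸ bar_symm hz)⟩
  · unfold El.meet at h ⊢
    split_ifs at h ⊢ with g1 g2 <;> simp_all

theorem opK_third {T : TM} (a b z : El T) (h : El.opK a b z ≠ El.zero)
    (ha : a = El.opK a b z) :
    El.opK a b z = z ∨ El.bar z = some (El.opK a b z) := by
  unfold El.opK at *
  split_ifs at h ha ⊢ with h1 h2
  · exact absurd (ha ▸ h1) (bar_ne_self _)
  · exact Or.inl rfl
  · unfold El.meet at h ha ⊢
    split_ifs at h ha ⊢ with g1 g2 <;> simp_all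

theorem coe_KB {T : TM} {ι : Type*} {B : (Sig T).Substructure (ι → El T)}
    (a b c : ↥B) (l : ι) :
    ((KB T a b c : ↥B) : ι → El T) l
      = El.opK ((a : ι → El T) l) ((b : ι → El T) l) ((c : ι → El T) l) := rfl

/-- Let `L` be an index set, `B ≤ A'(T)^L` and `C ⊆ B` such
that (1) every `c ∈ C` is nowhere `0`, and (2) if `c ∈ C` and `a ∈ B` satisfy
`c(l) ∈ {a(l), ∂a(l)}` for all `l`, then `c = a`.  If `f₁, f₂, f₃` are unary
polynomials of `B` each either constant or with `fᵢ⁻¹(C) ⊆ C`, then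
`f(x) = K(f₁(x), f₂(x), f₃(x))` is either constant or satisfies `f⁻¹(C) ⊆ C`. -/
theorem K_constant_or_preimage_subset (T : TM) (ι : Type*)
    (B : (Sig T).Substructure (ι → El T)) (C : Set ↥B)
    (hC0 : ∀ c : ↥B, c ∈ C → ∀ l : ι, (c : ι → El T) l ≠ El.zero)
    (hC1 : ∀ c ∈ C, ∀ a : ↥B,
      (∀ l : ι, (c : ι → El T) l = (a : ι → El T) l ∨
        El.bar ((a : ι → El T) l) = some ((c : ι → El T) l)) → c = a)
    (f₁ f₂ f₃ : ↥B → ↥B)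
    (hp₁ : IsPolynomial T f₁) (hp₂ : IsPolynomial T f₂) (hp₃ : IsPolynomial T f₃)
    (h₁ : (∃ k, ∀ x, f₁ x = k) ∨ ∀ x, f₁ x ∈ C → x ∈ C)
    (h₂ : (∃ k, ∀ x, f₂ x = k) ∨ ∀ x, f₂ x ∈ C → x ∈ C)
    (h₃ : (∃ k, ∀ x, f₃ x = k) ∨ ∀ x, f₃ x ∈ C → x ∈ C) :
    (∃ k, ∀ x : ↥B, KB T (f₁ x) (f₂ x) (f₃ x) = k) ∨
    (∀ x : ↥B, KB T (f₁ x) (f₂ x) (f₃ x) ∈ C → x ∈ C) := by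
  -- key claim: if the value is in C, it equals f₁ x and f₂ x
  have key : ∀ x : ↥B, KB T (f₁ x) (f₂ x) (f₃ x) ∈ C →
      KB T (f₁ x) (f₂ x) (f₃ x) = f₁ x ∧ KB T (f₁ x) (f₂ x) (f₃ x) = f₂ x := by
    intro x hx
    have hne := hC0 _ hx
    constructor
    · refine hC1 _ hx (f₁ x) fun l => ?_
      have := (opK_first_second ((f₁ x : ι → El T) l) ((f₂ x : ι → El T) l)
        ((f₃ x : ι → El T) l) (by rw [← coe_KB]; exact hne l)).1
      rwa [← coe_KB] at this
    · refine hC1 _ hx (f₂ x) fun l => ?_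
      have := (opK_first_second ((f₁ x : ι → El T) l) ((f₂ x : ι → El T) l)
        ((f₃ x : ι → El T) l) (by rw [← coe_KB]; exact hne l)).2
      rwa [← coe_KB] at this
  rcases h₁ with h₁ | h₁
  · rcases h₂ with h₂ | h₂
    · rcases h₃ with h₃ | h₃
      · -- all constant
        obtain ⟨k₁, hk₁⟩ := h₁; obtain ⟨k₂, hk₂⟩ := h₂; obtain ⟨k₃, hk₃⟩ := h₃
        exact Or.inl ⟨KB T k₁ k₂ k₃, fun x => by rw [hk₁, hk₂, hk₃]⟩
      · -- f₁, f₂ constant, f₃ preimage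
        refine Or.inr fun x hx => ?_
        obtain ⟨e₁, _⟩ := key x hx
        have hne := hC0 _ hx
        have e₃ : KB T (f₁ x) (f₂ x) (f₃ x) = f₃ x := by
          refine hC1 _ hx (f₃ x) fun l => ?_
          have := opK_third ((f₁ x : ι → El T) l) ((f₂ x : ι → El T) l)
            ((f₃ x : ι → El T) l) (by rw [← coe_KB]; exact hne l)
            (by rw [← coe_KB, e₁])
          rwa [← coe_KB] at this
        exact h₃ x (e₃ ▸ hx)
    · refine Or.inr fun x hx => h₂ x ((key x hx).2 ▸ hx)
  · refine Or.inr fun x hx => h₁ x ((key x hx).1 ▸ hx)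

end McKenzie
end
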